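/- arXiv:2205.05236 — 2 statements merged into one kernel-verified Lean document; each statement's English description precedes it below -/
import Mathlib

section
/- For a monotone submodular function f : Finset α → ℝ with f(∅) = 0 on a finite ground set, the greedy algorithm that iteratively adds the element with maximum marginal gain produces, after l steps, a set S_l with f(S_l) ≥ (1 - (1 - 1/l)^l) · max{f(T) : |T| = l} ≥ (1 - 1/e) · max{f(T) : |T| = l}. -/
/-- Submodularity gives: value of a union bounded by sum of marginal gains. -/
lemma union_marginal_bound {α : Type*} [DecidableEq α]
    (f : Finset α → ℝ)
    (hsub : ∀ S T : Finset α, S ⊆ T → ∀ e : α,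
      f (insert e T) - f T ≤ f (insert e S) - f S) :
    ∀ (T A : Finset α), f (A ∪ T) ≤ f A + ∑ x ∈ T, (f (insert x A) - f A) := by
  intro T
  induction T using Finset.induction with
  | empty => intro A; simp
  | @insert a T ha ih =>
    intro A
    have h1 : A ∪ insert a T = insert a (A ∪ T) := by
      ext x; simp [or_comm, or_left_comm, or_assoc]
    have h2 : f (insert a (A ∪ T)) - f (A ∪ T) ≤ f (insert a A) - f A :=
      hsub A (A ∪ T) Finset.subset_union_left a
    have h3 := ih A
    rw [h1, Finset.sum_insert ha]
    linarith

/-- The greedy algorithm for maximizing a monotone submodular function `f` with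
`f ∅ = 0` achieves, after `l` steps, value at least `(1 - (1 - 1/l)^l)` times the
optimum over size-`l` sets, which is itself at least `(1 - 1/e)` times that optimum. -/
theorem greedy_submodular_guarantee {α : Type*} [DecidableEq α] [Fintype α]
    (f : Finset α → ℝ) (h0 : f ∅ = 0)
    (hmono : ∀ S T : Finset α, S ⊆ T → f S ≤ f T)
    (hsub : ∀ S T : Finset α, S ⊆ T → ∀ e : α,
      f (insert e T) - f T ≤ f (insert e S) - f S)
    (l : ℕ) (hl : 1 ≤ l)
    (S : ℕ → Finset α) (e : ℕ → α)
    (hS0 : S 0 = ∅)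
    (hSsucc : ∀ i, S (i + 1) = insert (e i) (S i))
    (hgreedy : ∀ i, ∀ x : α, f (insert x (S i)) - f (S i) ≤
      f (insert (e i) (S i)) - f (S i)) :
    ∀ T : Finset α, T.card = l →
      (1 - (1 - 1 / (l : ℝ)) ^ l) * f T ≤ f (S l) ∧
      (1 - 1 / Real.exp 1) * f T ≤ (1 - (1 - 1 / (l : ℝ)) ^ l) * f T := by
  intro T hT
  have hl' : (1 : ℝ) ≤ (l : ℝ) := by exact_mod_cast hl
  have hlpos : (0 : ℝ) < (l : ℝ) := by linarith
  have hfT : 0 ≤ f T := by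
    have := hmono ∅ T (Finset.empty_subset T); linarith [h0]
  have hq0 : (0 : ℝ) ≤ 1 - 1 / (l : ℝ) := by
    have : 1 / (l : ℝ) ≤ 1 := by
      rw [div_le_one hlpos]; exact hl'
    linarith
  -- The per-step inequality
  have hstep : ∀ i, f T - f (S (i + 1)) ≤ (1 - 1 / (l : ℝ)) * (f T - f (S i)) := by
    intro i
    have h1 : f T ≤ f (S i ∪ T) := hmono T _ Finset.subset_union_right
    have h2 := union_marginal_bound f hsub T (S i)
    have hgain : ∀ x ∈ T, f (insert x (S i)) - f (S i) ≤ f (S (i + 1)) - f (S i) := by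
      intro x _
      rw [hSsucc i]; exact hgreedy i x
    have h3 : ∑ x ∈ T, (f (insert x (S i)) - f (S i)) ≤
        (l : ℝ) * (f (S (i + 1)) - f (S i)) := by
      calc ∑ x ∈ T, (f (insert x (S i)) - f (S i))
          ≤ ∑ _x ∈ T, (f (S (i + 1)) - f (S i)) := Finset.sum_le_sum hgain
        _ = (l : ℝ) * (f (S (i + 1)) - f (S i)) := by
            rw [Finset.sum_const, hT, nsmul_eq_mul]
    have h4 : f T ≤ f (S i) + (l : ℝ) * (f (S (i + 1)) - f (S i)) := by linarith
    have hexp : (1 - 1 / (l : ℝ)) * (f T - f (S i))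
        = (f T - f (S i)) - (f T - f (S i)) / (l : ℝ) := by ring
    rw [hexp]
    have key : (f T - f (S i)) / (l : ℝ) ≤ f (S (i + 1)) - f (S i) := by
      rw [div_le_iff₀ hlpos]; nlinarith
    linarith
  -- Iterate
  have hiter : ∀ i, f T - f (S i) ≤ (1 - 1 / (l : ℝ)) ^ i * f T := by
    intro i
    induction i with
    | zero => simp [hS0, h0]
    | succ i ih =>
      calc f T - f (S (i + 1)) ≤ (1 - 1 / (l : ℝ)) * (f T - f (S i)) := hstep i
        _ ≤ (1 - 1 / (l : ℝ)) * ((1 - 1 / (l : ℝ)) ^ i * f T) :=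
            mul_le_mul_of_nonneg_left ih hq0
        _ = (1 - 1 / (l : ℝ)) ^ (i + 1) * f T := by ring
  have h1 : (1 - (1 - 1 / (l : ℝ)) ^ l) * f T ≤ f (S l) := by
    have := hiter l; nlinarith
  refine ⟨h1, ?_⟩
  have hpow : (1 - 1 / (l : ℝ)) ^ l ≤ 1 / Real.exp 1 := by
    have h2 : 1 - 1 / (l : ℝ) ≤ Real.exp (-(1 / (l : ℝ))) := by
      have := Real.add_one_le_exp (-(1 / (l : ℝ))); linarith
    calc (1 - 1 / (l : ℝ)) ^ l ≤ (Real.exp (-(1 / (l : ℝ)))) ^ l :=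
          pow_le_pow_left₀ hq0 h2 l
      _ = Real.exp (-(1 / (l : ℝ)) * l) := by rw [← Real.exp_nat_mul]; ring_nf
      _ = Real.exp (-1) := by
          congr 1; field_simp
      _ = 1 / Real.exp 1 := by rw [Real.exp_neg]; ring
  nlinarith [hfT, hpow]
end

section
/- Let OPT = max{f(T) : |T| = l} for a monotone submodular f with f(∅)=0 on a finite ground set, and let S_i be the greedy set after i steps. Then OPT - f(S_{i+1}) ≤ (1 - 1/l)·(OPT - f(S_i)) for each i < l. -/
lemma greedy_telescope {α : Type*} [DecidableEq α]
    (f : Finset α → ℝ)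
    (hsub : ∀ S T : Finset α, S ⊆ T → ∀ e : α,
      f (insert e T) - f T ≤ f (insert e S) - f S)
    (A B : Finset α) :
    f (A ∪ B) - f B ≤ ∑ x ∈ A, (f (insert x B) - f B) := by
  induction A using Finset.induction_on with
  | empty => simp
  | insert _ _ ha ih =>
    rename_i a A'
    rw [Finset.sum_insert ha, Finset.insert_union]
    have h1 : f (insert a (A' ∪ B)) - f (A' ∪ B) ≤ f (insert a B) - f B :=
      hsub B (A' ∪ B) Finset.subset_union_right a
    linarith

/-- One-step contraction of the greedy algorithm for monotone submodular
maximization: `OPT - f(S_{i+1}) ≤ (1 - 1/l)·(OPT - f(S_i))` for each `i < l`. -/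
theorem greedy_step_contraction {α : Type*} [DecidableEq α] [Fintype α]
    (f : Finset α → ℝ) (h0 : f ∅ = 0)
    (hmono : ∀ S T : Finset α, S ⊆ T → f S ≤ f T)
    (hsub : ∀ S T : Finset α, S ⊆ T → ∀ e : α,
      f (insert e T) - f T ≤ f (insert e S) - f S)
    (l : ℕ) (hl : 1 ≤ l) (OPT : ℝ)
    (hOPT : ∃ T : Finset α, T.card = l ∧ f T = OPT ∧
      ∀ T' : Finset α, T'.card = l → f T' ≤ OPT)
    (S : ℕ → Finset α) (e : ℕ → α)
    (hS0 : S 0 = ∅)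
    (hSsucc : ∀ i, S (i + 1) = insert (e i) (S i))
    (hgreedy : ∀ i, ∀ x : α, f (insert x (S i)) - f (S i) ≤
      f (insert (e i) (S i)) - f (S i)) :
    ∀ i < l, OPT - f (S (i + 1)) ≤ (1 - 1 / (l : ℝ)) * (OPT - f (S i)) := by
  intro i _
  obtain ⟨T, hTc, hTf, _⟩ := hOPT
  have hlpos : (0 : ℝ) < l := by exact_mod_cast hl
  set Δ : ℝ := f (S (i + 1)) - f (S i) with hΔ
  have hΔ0 : 0 ≤ Δ := by
    have := hmono (S i) (S (i + 1)) (by rw [hSsucc]; exact Finset.subset_insert _ _)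
    linarith
  have h1 : OPT - f (S i) ≤ l * Δ := by
    calc OPT - f (S i) ≤ f (T ∪ S i) - f (S i) := by
          have := hmono T (T ∪ S i) Finset.subset_union_left
          linarith [hTf ▸ this]
      _ ≤ ∑ x ∈ T, (f (insert x (S i)) - f (S i)) := greedy_telescope f hsub T (S i)
      _ ≤ ∑ _x ∈ T, Δ := by
          apply Finset.sum_le_sum
          intro x _
          have := hgreedy i x
          rw [hΔ, hSsucc]
          linarith
      _ = l * Δ := by rw [Finset.sum_const, hTc]; push_cast; ring
  have h2 : (OPT - f (S i)) / l ≤ Δ := by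
    rw [div_le_iff₀ hlpos]; linarith
  have : OPT - f (S (i + 1)) = (OPT - f (S i)) - Δ := by rw [hΔ]; ring
  rw [this, sub_mul, one_mul]
  rw [div_mul_eq_mul_div, one_mul] at *
  linarith
end
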